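/- arXiv:2209.08227 — 4 statements merged into one kernel-verified Lean document; each statement's English description precedes it below -/
import Mathlib

section
/- For the particle–Maxwell system dv_p/dt = −E(x_p) − v_p×B(x_p), dx_p/dt = v_p (p = 1,…,N), λ²∂_t E − ∇×B = −J, ∂_t B + ∇×E = 0, where J(x,t) = −Σ_p w_p S(x − x_p(t)) v_p(t) and E(x_p) := ∫ E(x)S(x − x_p) dx, B(x_p) := ∫ B(x)S(x − x_p) dx, with periodic boundary conditions, the total energy Σ_p (1/2)w_p|v_p|² + (λ²/2)∫|E|² dx + (1/2)∫|B|² dx is constant in time. -/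
open MeasureTheory Matrix

noncomputable section

abbrev V3 := Fin 3 → ℝ

def pd (j : Fin 3) (g : V3 → ℝ) (x : V3) : ℝ :=
  fderiv ℝ g x (Pi.single j 1)

def vcurl (F : V3 → V3) (x : V3) : V3 :=
  ![pd 1 (fun y => F y 2) x - pd 2 (fun y => F y 1) x,
    pd 2 (fun y => F y 0) x - pd 0 (fun y => F y 2) x,
    pd 0 (fun y => F y 1) x - pd 1 (fun y => F y 0) x]

lemma hasDerivAt_slice {W : Type*} [NormedAddCommGroup W] [NormedSpace ℝ W]
    (G : V3 × ℝ → W) (hG : ContDiff ℝ (⊤ : ℕ∞) G) (x : V3) (t : ℝ) :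
    HasDerivAt (fun s => G (x, s)) (fderiv ℝ G (x, t) ((0 : V3), (1 : ℝ))) t := by
  have h1 : HasDerivAt (fun s : ℝ => ((x, s) : V3 × ℝ)) ((0 : V3), (1 : ℝ)) t :=
    (hasDerivAt_const t x).prodMk (hasDerivAt_id t)
  exact ((hG.differentiable (by simp) _).hasFDerivAt).comp_hasDerivAt t h1

lemma continuous_slice_deriv {W : Type*} [NormedAddCommGroup W] [NormedSpace ℝ W]
    (G : V3 × ℝ → W) (hG : ContDiff ℝ (⊤ : ℕ∞) G) :
    Continuous (fun p : V3 × ℝ => fderiv ℝ G p ((0 : V3), (1 : ℝ))) :=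
  (hG.continuous_fderiv (by simp)).clm_apply continuous_const

lemma cont_dot {α : Type*} [TopologicalSpace α] {f g : α → V3}
    (hf : Continuous f) (hg : Continuous g) :
    Continuous fun x => f x ⬝ᵥ g x := by
  simp only [dotProduct]
  exact continuous_finset_sum _ fun i _ =>
    ((continuous_apply i).comp hf).mul ((continuous_apply i).comp hg)

lemma hasDerivAt_param_integral (a b : V3) (G : V3 × ℝ → ℝ) (hG : ContDiff ℝ (⊤ : ℕ∞) G) (t : ℝ) :
    HasDerivAt (fun s => ∫ x in Set.Icc a b, G (x, s))
      (∫ x in Set.Icc a b, fderiv ℝ G (x, t) ((0 : V3), (1 : ℝ))) t := by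
  set μ : Measure V3 := volume.restrict (Set.Icc a b) with hμ
  have hfin : μ (Set.univ) < ⊤ := by
    rw [hμ, Measure.restrict_apply_univ]
    exact isCompact_Icc.measure_lt_top
  haveI : IsFiniteMeasure μ := ⟨hfin⟩
  have hGc : Continuous G := hG.continuous
  have hF' : Continuous (fun p : V3 × ℝ => fderiv ℝ G p ((0 : V3), (1 : ℝ))) :=
    continuous_slice_deriv G hG
  obtain ⟨C, hC⟩ : ∃ C, ∀ p ∈ Set.Icc a b ×ˢ Set.Icc (t - 1) (t + 1),
      ‖fderiv ℝ G p ((0 : V3), (1 : ℝ))‖ ≤ C :=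
    (isCompact_Icc.prod isCompact_Icc).exists_bound_of_continuousOn hF'.continuousOn
  have key := hasDerivAt_integral_of_dominated_loc_of_deriv_le (μ := μ)
      (F := fun s x => G (x, s)) (F' := fun s x => fderiv ℝ G (x, s) ((0 : V3), (1 : ℝ)))
      (bound := fun _ => C) (x₀ := t) (Metric.ball_mem_nhds t one_pos)
      (Filter.Eventually.of_forall fun s =>
        (hGc.comp (continuous_id.prodMk continuous_const)).aestronglyMeasurable)
      ((hGc.comp (continuous_id.prodMk continuous_const)).continuousOn.integrableOn_compact
        isCompact_Icc)
      ((hF'.comp (continuous_id.prodMk continuous_const)).aestronglyMeasurable)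
      ?_ (integrable_const C) ?_
  · exact key.2
  · filter_upwards [ae_restrict_mem measurableSet_Icc] with x hx s hs
    refine hC (x, s) ⟨hx, ?_⟩
    rw [Real.ball_eq_Ioo] at hs
    exact ⟨hs.1.le, hs.2.le⟩
  · exact Filter.Eventually.of_forall fun x s _ => hasDerivAt_slice G hG x s

lemma insertNth_shift (a b : V3) (i : Fin 3) (x : Fin 2 → ℝ) :
    (i.insertNth (b i) x : V3) = i.insertNth (a i) x + (b i - a i) • (Pi.single i 1 : V3) := by
  funext j
  refine Fin.succAboveCases i ?_ ?_ j
  · simp [Pi.single_eq_same]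
  · intro k
    simp [Fin.insertNth_apply_succAbove, Pi.single_eq_of_ne (Fin.succAbove_ne i k)]

lemma periodic_box_divergence (a b : V3) (hab : a ≤ b) (f : Fin 3 → V3 → ℝ)
    (hf : ∀ i, ContDiff ℝ (⊤ : ℕ∞) (f i))
    (hper : ∀ (i j : Fin 3) (y : V3),
      f j (y + (b i - a i) • (Pi.single i 1 : V3)) = f j y) :
    (∫ x in Set.Icc a b, ∑ i, fderiv ℝ (f i) x (Pi.single i 1)) = 0 := by
  have hd : ∀ i x, HasFDerivAt (f i) (fderiv ℝ (f i) x) x :=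
    fun i x => ((hf i).differentiable (by simp) x).hasFDerivAt
  have hcont : Continuous fun x => ∑ i, fderiv ℝ (f i) x (Pi.single i 1) := by
    refine continuous_finset_sum _ fun i _ => ?_
    exact ((hf i).continuous_fderiv (by simp)).clm_apply continuous_const
  have := integral_divergence_of_hasFDerivAt_off_countable (n := 2) a b hab
      (fun x i => f i x) (fun x => ContinuousLinearMap.pi fun i => fderiv ℝ (f i) x)
      ∅ Set.countable_empty
      (continuousOn_pi.2 fun i => (hf i).continuous.continuousOn)
      (fun x _ => hasFDerivAt_pi.2 fun i => hd i x)
      (hcont.continuousOn.integrableOn_compact isCompact_Icc)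
  simp only [ContinuousLinearMap.pi_apply] at this
  rw [this]
  refine Finset.sum_eq_zero fun i _ => ?_
  rw [sub_eq_zero]
  refine setIntegral_congr_fun measurableSet_Icc fun x _ => ?_
  rw [insertNth_shift a b i x, hper]

lemma pd_mul (j : Fin 3) (f g : V3 → ℝ) (x : V3)
    (hf : DifferentiableAt ℝ f x) (hg : DifferentiableAt ℝ g x) :
    pd j (fun y => f y * g y) x = f x * pd j g x + g x * pd j f x := by
  simp only [pd]
  rw [fderiv_fun_mul hf hg]
  simp [smul_eq_mul]

lemma pd_sub (j : Fin 3) (f g : V3 → ℝ) (x : V3)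
    (hf : DifferentiableAt ℝ f x) (hg : DifferentiableAt ℝ g x) :
    pd j (fun y => f y - g y) x = pd j f x - pd j g x := by
  simp only [pd]
  rw [fderiv_fun_sub hf hg]
  simp

lemma divergence_cross (Et Bt : V3 → V3) (hEt : ContDiff ℝ (⊤ : ℕ∞) Et) (hBt : ContDiff ℝ (⊤ : ℕ∞) Bt)
    (x : V3) :
    ∑ i, pd i (fun y => (crossProduct (Bt y) (Et y)) i) x
      = Et x ⬝ᵥ vcurl Bt x - Bt x ⬝ᵥ vcurl Et x := by
  have hE : ∀ (k : Fin 3), Differentiable ℝ (fun y => Et y k) :=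
    fun k => differentiable_pi.mp (hEt.differentiable (by simp)) k
  have hB : ∀ (k : Fin 3), Differentiable ℝ (fun y => Bt y k) :=
    fun k => differentiable_pi.mp (hBt.differentiable (by simp)) k
  have hc : ∀ i : Fin 3, (fun y => (crossProduct (Bt y) (Et y)) i) =
      (fun y => ![Bt y 1 * Et y 2 - Bt y 2 * Et y 1,
                  Bt y 2 * Et y 0 - Bt y 0 * Et y 2,
                  Bt y 0 * Et y 1 - Bt y 1 * Et y 0] i) := by
    intro i; funext y; rw [cross_apply]
  rw [Fin.sum_univ_three, hc 0, hc 1, hc 2]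
  simp only [Matrix.cons_val_zero, Matrix.cons_val_one, Matrix.head_cons,
    Matrix.cons_val_two, Matrix.tail_cons]
  rw [pd_sub _ _ _ _ (((hB 1) x).fun_mul ((hE 2) x)) (((hB 2) x).fun_mul ((hE 1) x)),
      pd_sub _ _ _ _ (((hB 2) x).fun_mul ((hE 0) x)) (((hB 0) x).fun_mul ((hE 2) x)),
      pd_sub _ _ _ _ (((hB 0) x).fun_mul ((hE 1) x)) (((hB 1) x).fun_mul ((hE 0) x)),
      pd_mul _ _ _ _ ((hB 1) x) ((hE 2) x), pd_mul _ _ _ _ ((hB 2) x) ((hE 1) x),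
      pd_mul _ _ _ _ ((hB 2) x) ((hE 0) x), pd_mul _ _ _ _ ((hB 0) x) ((hE 2) x),
      pd_mul _ _ _ _ ((hB 0) x) ((hE 1) x), pd_mul _ _ _ _ ((hB 1) x) ((hE 0) x)]
  simp only [vcurl, dotProduct, Fin.sum_univ_three,
    Matrix.cons_val_zero, Matrix.cons_val_one, Matrix.head_cons,
    Matrix.cons_val_two, Matrix.tail_cons]
  ring

lemma dot_integral (c : V3) {μ : Measure V3} (f : V3 → V3) (hf : Integrable f μ) :
    c ⬝ᵥ (∫ x, f x ∂μ) = ∫ x, c ⬝ᵥ f x ∂μ := by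
  have hcomp : ∀ i : Fin 3, (∫ x, f x ∂μ) i = ∫ x, f x i ∂μ := by
    intro i
    have := (ContinuousLinearMap.proj (R := ℝ) (φ := fun _ : Fin 3 => ℝ) i).integral_comp_comm hf
    simpa using this.symm
  have hint : ∀ i : Fin 3, Integrable (fun x => c i * f x i) μ := by
    intro i
    exact ((ContinuousLinearMap.proj (R := ℝ) (φ := fun _ : Fin 3 => ℝ) i).integrable_comp
      hf).const_mul _
  simp only [dotProduct]
  rw [integral_finset_sum _ fun i _ => hint i]
  exact Finset.sum_congr rfl fun i _ => by rw [hcomp, integral_const_mul]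

/-- energy conservation for the particle–Maxwell system with
shape-function current deposition and field interpolation on a periodic box. -/
theorem particle_maxwell_energy_conservation
    (lam : ℝ) (hlam : 0 < lam) (N : ℕ)
    (a b : V3) (hab : a ≤ b)
    (w : Fin N → ℝ) (hw : ∀ p, 0 < w p)
    (S : V3 → ℝ) (hS_smooth : ContDiff ℝ (⊤ : ℕ∞) S)
    (hS_int : (∫ y in Set.Icc a b, S y) = 1)
    (hSper : ∀ (i : Fin 3) y, S (y + (b i - a i) • (Pi.single i 1 : V3)) = S y)
    (X V : Fin N → ℝ → V3) (E B : V3 → ℝ → V3) (J : V3 → ℝ → V3)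
    (hE_smooth : ContDiff ℝ (⊤ : ℕ∞) (fun p : V3 × ℝ => E p.1 p.2))
    (hB_smooth : ContDiff ℝ (⊤ : ℕ∞) (fun p : V3 × ℝ => B p.1 p.2))
    (hX_smooth : ∀ p, ContDiff ℝ (⊤ : ℕ∞) (X p)) (hV_smooth : ∀ p, ContDiff ℝ (⊤ : ℕ∞) (V p))
    (hEper : ∀ (i : Fin 3) x t, E (x + (b i - a i) • (Pi.single i 1 : V3)) t = E x t)
    (hBper : ∀ (i : Fin 3) x t, B (x + (b i - a i) • (Pi.single i 1 : V3)) t = B x t)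
    -- current deposition `J(x,t) = −Σ_p w_p S(x − x_p(t)) v_p(t)`
    (hJ : ∀ x t, J x t = -∑ p, (w p * S (x - X p t)) • V p t)
    -- Newton's equations with shape-function interpolated fields:
    -- `dv_p/dt = −E(x_p) − v_p × B(x_p)`, `dx_p/dt = v_p`
    (hNewtonV : ∀ p t, deriv (V p) t
        = -(∫ y in Set.Icc a b, S (y - X p t) • E y t)
          - crossProduct (V p t) (∫ y in Set.Icc a b, S (y - X p t) • B y t))
    (hNewtonX : ∀ p t, deriv (X p) t = V p t)
    -- Ampère's law `λ² ∂ₜ E − ∇×B = −J`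
    (hAmpere : ∀ x t, lam ^ 2 • deriv (fun s => E x s) t - vcurl (fun y => B y t) x = -J x t)
    -- Faraday's law `∂ₜ B + ∇×E = 0`
    (hFaraday : ∀ x t, deriv (fun s => B x s) t + vcurl (fun y => E y t) x = 0) :
    ∀ t, deriv (fun s =>
        (∑ p, (1/2) * w p * (V p s ⬝ᵥ V p s))
        + (lam ^ 2 / 2) * (∫ x in Set.Icc a b, E x s ⬝ᵥ E x s)
        + (1/2) * (∫ x in Set.Icc a b, B x s ⬝ᵥ B x s)) t = 0 := by
  intro t
  have hEcomp : ∀ i : Fin 3, ContDiff ℝ (⊤ : ℕ∞) (fun p : V3 × ℝ => E p.1 p.2 i) :=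
    fun i => contDiff_pi.mp hE_smooth i
  have hBcomp : ∀ i : Fin 3, ContDiff ℝ (⊤ : ℕ∞) (fun p : V3 × ℝ => B p.1 p.2 i) :=
    fun i => contDiff_pi.mp hB_smooth i
  set dE : V3 → V3 :=
    fun x => fderiv ℝ (fun p : V3 × ℝ => E p.1 p.2) (x, t) ((0 : V3), (1 : ℝ)) with hdE_def
  set dB : V3 → V3 :=
    fun x => fderiv ℝ (fun p : V3 × ℝ => B p.1 p.2) (x, t) ((0 : V3), (1 : ℝ)) with hdB_def
  have hEder : ∀ x, HasDerivAt (fun s => E x s) (dE x) t :=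
    fun x => hasDerivAt_slice _ hE_smooth x t
  have hBder : ∀ x, HasDerivAt (fun s => B x s) (dB x) t :=
    fun x => hasDerivAt_slice _ hB_smooth x t
  have hdEc : Continuous dE :=
    (continuous_slice_deriv _ hE_smooth).comp (continuous_id.prodMk continuous_const)
  have hdBc : Continuous dB :=
    (continuous_slice_deriv _ hB_smooth).comp (continuous_id.prodMk continuous_const)
  have hEtCD : ContDiff ℝ (⊤ : ℕ∞) (fun x => E x t) :=
    hE_smooth.comp (contDiff_id.prodMk contDiff_const)
  have hBtCD : ContDiff ℝ (⊤ : ℕ∞) (fun x => B x t) :=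
    hB_smooth.comp (contDiff_id.prodMk contDiff_const)
  have hEtc : Continuous (fun x => E x t) := hEtCD.continuous
  have hBtc : Continuous (fun x => B x t) := hBtCD.continuous
  -- Maxwell at time t, in terms of dE, dB
  have hAmp : ∀ x, lam ^ 2 • dE x = vcurl (fun y => B y t) x - J x t := by
    intro x
    have h := hAmpere x t
    rw [(hEder x).deriv] at h
    have h2 := sub_eq_iff_eq_add.mp h
    rw [h2, neg_add_eq_sub]
  have hFar : ∀ x, dB x = -vcurl (fun y => E y t) x := by
    intro x
    have h := hFaraday x t
    rw [(hBder x).deriv] at h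
    exact eq_neg_of_add_eq_zero_left h
  -- kinetic part
  have hVder : ∀ p, HasDerivAt (V p) (deriv (V p) t) t :=
    fun p => ((hV_smooth p).differentiable (by simp) t).hasDerivAt
  have hVc : ∀ p (i : Fin 3), HasDerivAt (fun s => V p s i) (deriv (V p) t i) t := fun p i =>
    ((ContinuousLinearMap.proj (R := ℝ) (φ := fun _ : Fin 3 => ℝ) i).hasFDerivAt).comp_hasDerivAt
      t (hVder p)
  have hK : HasDerivAt (fun s => ∑ p, (1/2) * w p * (V p s ⬝ᵥ V p s))
      (∑ p, w p * (V p t ⬝ᵥ deriv (V p) t)) t := by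
    refine HasDerivAt.fun_sum fun p _ => ?_
    have hdot : HasDerivAt (fun s => V p s ⬝ᵥ V p s)
        (∑ i, (deriv (V p) t i * V p t i + V p t i * deriv (V p) t i)) t := by
      simp only [dotProduct]
      exact HasDerivAt.fun_sum fun i _ => (hVc p i).fun_mul (hVc p i)
    have h2 := hdot.const_mul ((1:ℝ)/2 * w p)
    refine h2.congr_deriv ?_
    simp only [dotProduct, Fin.sum_univ_three]
    ring
  -- field parts: derivative under the integral
  have hGE : ContDiff ℝ (⊤ : ℕ∞) (fun p : V3 × ℝ => E p.1 p.2 ⬝ᵥ E p.1 p.2) := by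
    simp only [dotProduct]
    exact ContDiff.sum fun i _ => (hEcomp i).mul (hEcomp i)
  have hGB : ContDiff ℝ (⊤ : ℕ∞) (fun p : V3 × ℝ => B p.1 p.2 ⬝ᵥ B p.1 p.2) := by
    simp only [dotProduct]
    exact ContDiff.sum fun i _ => (hBcomp i).mul (hBcomp i)
  have hdotE : ∀ x, HasDerivAt (fun s => E x s ⬝ᵥ E x s) (2 * (E x t ⬝ᵥ dE x)) t := by
    intro x
    have hc : ∀ i : Fin 3, HasDerivAt (fun s => E x s i) (dE x i) t := fun i =>
      ((ContinuousLinearMap.proj (R := ℝ) (φ := fun _ : Fin 3 => ℝ) i).hasFDerivAt).comp_hasDerivAt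
        t (hEder x)
    have h := HasDerivAt.fun_sum (fun i (_ : i ∈ Finset.univ) => (hc i).fun_mul (hc i))
    have heq : (fun s => E x s ⬝ᵥ E x s) = fun s => ∑ i, E x s i * E x s i := by
      funext s; simp [dotProduct]
    rw [heq]
    refine h.congr_deriv ?_
    simp only [dotProduct, Fin.sum_univ_three]
    ring
  have hdotB : ∀ x, HasDerivAt (fun s => B x s ⬝ᵥ B x s) (2 * (B x t ⬝ᵥ dB x)) t := by
    intro x
    have hc : ∀ i : Fin 3, HasDerivAt (fun s => B x s i) (dB x i) t := fun i =>
      ((ContinuousLinearMap.proj (R := ℝ) (φ := fun _ : Fin 3 => ℝ) i).hasFDerivAt).comp_hasDerivAt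
        t (hBder x)
    have h := HasDerivAt.fun_sum (fun i (_ : i ∈ Finset.univ) => (hc i).fun_mul (hc i))
    have heq : (fun s => B x s ⬝ᵥ B x s) = fun s => ∑ i, B x s i * B x s i := by
      funext s; simp [dotProduct]
    rw [heq]
    refine h.congr_deriv ?_
    simp only [dotProduct, Fin.sum_univ_three]
    ring
  have hIEeq : ∀ x, fderiv ℝ (fun p : V3 × ℝ => E p.1 p.2 ⬝ᵥ E p.1 p.2) (x, t)
      ((0 : V3), (1 : ℝ)) = 2 * (E x t ⬝ᵥ dE x) := fun x =>
    HasDerivAt.unique (hasDerivAt_slice _ hGE x t) (hdotE x)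
  have hIBeq : ∀ x, fderiv ℝ (fun p : V3 × ℝ => B p.1 p.2 ⬝ᵥ B p.1 p.2) (x, t)
      ((0 : V3), (1 : ℝ)) = 2 * (B x t ⬝ᵥ dB x) := fun x =>
    HasDerivAt.unique (hasDerivAt_slice _ hGB x t) (hdotB x)
  have hIE' : HasDerivAt (fun s => ∫ x in Set.Icc a b, E x s ⬝ᵥ E x s)
      (∫ x in Set.Icc a b, 2 * (E x t ⬝ᵥ dE x)) t := by
    have h := hasDerivAt_param_integral a b _ hGE t
    simp only [hIEeq] at h
    exact h
  have hIB' : HasDerivAt (fun s => ∫ x in Set.Icc a b, B x s ⬝ᵥ B x s)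
      (∫ x in Set.Icc a b, 2 * (B x t ⬝ᵥ dB x)) t := by
    have h := hasDerivAt_param_integral a b _ hGB t
    simp only [hIBeq] at h
    exact h
  have htot : HasDerivAt (fun s =>
      (∑ p, (1/2) * w p * (V p s ⬝ᵥ V p s))
      + (lam ^ 2 / 2) * (∫ x in Set.Icc a b, E x s ⬝ᵥ E x s)
      + (1/2) * (∫ x in Set.Icc a b, B x s ⬝ᵥ B x s))
      ((∑ p, w p * (V p t ⬝ᵥ deriv (V p) t))
        + (lam ^ 2 / 2) * (∫ x in Set.Icc a b, 2 * (E x t ⬝ᵥ dE x))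
        + (1/2) * (∫ x in Set.Icc a b, 2 * (B x t ⬝ᵥ dB x))) t :=
    (hK.add (hIE'.const_mul _)).add (hIB'.const_mul _)
  rw [htot.deriv]
  -- continuity / integrability facts on the box
  have hScont : ∀ p : Fin N, Continuous (fun y => S (y - X p t)) := fun p =>
    hS_smooth.continuous.comp (continuous_id.sub continuous_const)
  have hJcont : Continuous (fun x => J x t) := by
    have : (fun x => J x t) = fun x => -∑ p, (w p * S (x - X p t)) • V p t := by
      funext x; exact hJ x t
    rw [this]
    exact (continuous_finset_sum _ fun p _ =>
      ((continuous_const.mul (hScont p)).smul continuous_const)).neg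
  -- kinetic derivative equals the work done by the field on the current
  have hA : (∑ p, w p * (V p t ⬝ᵥ deriv (V p) t))
      = ∫ x in Set.Icc a b, E x t ⬝ᵥ J x t := by
    have hrhs : (fun x => E x t ⬝ᵥ J x t)
        = fun x => -∑ p, w p * (S (x - X p t) * (E x t ⬝ᵥ V p t)) := by
      funext x
      rw [hJ x t, dotProduct_neg]
      refine congrArg Neg.neg ?_
      simp only [dotProduct, Finset.sum_apply, Pi.smul_apply, smul_eq_mul,
        Finset.mul_sum]
      rw [Finset.sum_comm]
      exact Finset.sum_congr rfl fun p _ =>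
        Finset.sum_congr rfl fun i _ => by ring
    rw [hrhs, integral_neg, integral_finset_sum _ (fun p _ =>
      ((continuous_const.fun_mul ((hScont p).fun_mul (cont_dot hEtc continuous_const)))
        ).continuousOn.integrableOn_compact isCompact_Icc)]
    rw [← Finset.sum_neg_distrib]
    refine Finset.sum_congr rfl fun p _ => ?_
    rw [integral_const_mul, hNewtonV p t]
    have hIntE : Integrable (fun y => S (y - X p t) • E y t)
        (volume.restrict (Set.Icc a b)) :=
      ((hScont p).smul hEtc).continuousOn.integrableOn_compact isCompact_Icc
    rw [dotProduct_sub, dotProduct_neg, dot_self_cross, sub_zero,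
      dot_integral _ _ hIntE]
    have : (fun y => V p t ⬝ᵥ (S (y - X p t) • E y t))
        = fun y => S (y - X p t) * (E y t ⬝ᵥ V p t) := by
      funext y
      rw [dotProduct_smul, smul_eq_mul, dotProduct_comm]
    rw [this]
    ring
  -- the divergence term
  have hcrossCD : ∀ i : Fin 3,
      ContDiff ℝ (⊤ : ℕ∞) (fun y => (crossProduct (B y t) (E y t)) i) := by
    intro i
    have hEk : ∀ k : Fin 3, ContDiff ℝ (⊤ : ℕ∞) (fun y => E y t k) :=
      fun k => contDiff_pi.mp hEtCD k
    have hBk : ∀ k : Fin 3, ContDiff ℝ (⊤ : ℕ∞) (fun y => B y t k) :=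
      fun k => contDiff_pi.mp hBtCD k
    have hc : (fun y => (crossProduct (B y t) (E y t)) i) =
        (fun y => ![B y t 1 * E y t 2 - B y t 2 * E y t 1,
                    B y t 2 * E y t 0 - B y t 0 * E y t 2,
                    B y t 0 * E y t 1 - B y t 1 * E y t 0] i) := by
      funext y; rw [cross_apply]
    rw [hc]
    fin_cases i <;>
      simp only [Matrix.cons_val_zero, Matrix.cons_val_one, Matrix.head_cons,
        Matrix.cons_val_two, Matrix.tail_cons] <;>
      exact (((hBk _).mul (hEk _)).sub ((hBk _).mul (hEk _)))
  have hper' : ∀ (i j : Fin 3) (y : V3),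
      (crossProduct (B (y + (b i - a i) • (Pi.single i 1 : V3)) t))
          (E (y + (b i - a i) • (Pi.single i 1 : V3)) t) j
        = (crossProduct (B y t)) (E y t) j := by
    intro i j y
    rw [hBper i y t, hEper i y t]
  have hDzero : (∫ x in Set.Icc a b,
      ∑ i, pd i (fun y => (crossProduct (B y t) (E y t)) i) x) = 0 := by
    have h0 := periodic_box_divergence a b hab
      (fun i y => (crossProduct (B y t) (E y t)) i) hcrossCD hper'
    exact h0
  have hDcont : Continuous (fun x =>
      ∑ i, pd i (fun y => (crossProduct (B y t) (E y t)) i) x) := by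
    refine continuous_finset_sum _ fun i _ => ?_
    exact ((hcrossCD i).continuous_fderiv (by simp)).clm_apply continuous_const
  -- field energy derivative
  have hfield : (lam ^ 2 / 2) * (∫ x in Set.Icc a b, 2 * (E x t ⬝ᵥ dE x))
      + (1/2) * (∫ x in Set.Icc a b, 2 * (B x t ⬝ᵥ dB x))
      = -∫ x in Set.Icc a b, E x t ⬝ᵥ J x t := by
    rw [integral_const_mul, integral_const_mul]
    have hstep : lam ^ 2 / 2 * (2 * ∫ x in Set.Icc a b, E x t ⬝ᵥ dE x)
        + 1 / 2 * (2 * ∫ x in Set.Icc a b, B x t ⬝ᵥ dB x)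
        = lam ^ 2 * (∫ x in Set.Icc a b, E x t ⬝ᵥ dE x)
          + (∫ x in Set.Icc a b, B x t ⬝ᵥ dB x) := by ring
    rw [hstep, ← integral_const_mul]
    have hint1 : Integrable (fun x => lam ^ 2 * (E x t ⬝ᵥ dE x))
        (volume.restrict (Set.Icc a b)) :=
      (continuous_const.mul (cont_dot hEtc hdEc)).continuousOn.integrableOn_compact
        isCompact_Icc
    have hint2 : Integrable (fun x => B x t ⬝ᵥ dB x)
        (volume.restrict (Set.Icc a b)) :=
      (cont_dot hBtc hdBc).continuousOn.integrableOn_compact isCompact_Icc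
    rw [← integral_add hint1 hint2]
    have hpt : ∀ x, lam ^ 2 * (E x t ⬝ᵥ dE x) + B x t ⬝ᵥ dB x
        = (∑ i, pd i (fun y => (crossProduct (B y t) (E y t)) i) x)
          - E x t ⬝ᵥ J x t := by
      intro x
      have h1 : lam ^ 2 * (E x t ⬝ᵥ dE x) = E x t ⬝ᵥ (lam ^ 2 • dE x) := by
        rw [dotProduct_smul, smul_eq_mul]
      rw [h1, hAmp x, dotProduct_sub]
      have h2 : B x t ⬝ᵥ dB x = -(B x t ⬝ᵥ vcurl (fun y => E y t) x) := by
        rw [hFar x, dotProduct_neg]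
      rw [h2, divergence_cross (fun y => E y t) (fun y => B y t) hEtCD hBtCD x]
      ring
    have hfun : (fun x => lam ^ 2 * (E x t ⬝ᵥ dE x) + B x t ⬝ᵥ dB x)
        = fun x => (∑ i, pd i (fun y => (crossProduct (B y t) (E y t)) i) x)
          - E x t ⬝ᵥ J x t := funext hpt
    rw [hfun]
    rw [integral_sub (hDcont.continuousOn.integrableOn_compact isCompact_Icc)
      ((cont_dot hEtc hJcont).continuousOn.integrableOn_compact isCompact_Icc)]
    rw [hDzero, zero_sub]
  rw [add_assoc, hfield, hA, add_neg_cancel]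
end
end

section
/- Uniform solvability of the AP field solver: for λ ≥ 0, Δt > 0, and density n^m bounded below by a constant c > 0, the operator (E, B) ↦ ((λ²/Δt + Δt n^m)E − ∇×B, ∇×E + B/Δt) acting on periodic square-integrable vector fields with curl in L² is invertible, with inverse bounded uniformly in λ ∈ [0, λ_0]; in particular the linear system of the AP/APEC predictor step has a unique solution even at the quasi-neutral limit λ = 0. -/
set_option maxHeartbeats 1000000


open MeasureTheory
open scoped RealInnerProductSpace

noncomputable section

/-- uniform solvability of the AP field solver. Abstract weak formulation:
`V` plays the role of the periodic space `H(curl)`, `H` of `L²`, `ι : V → H` the inclusion,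
`curl : V → H` the curl operator (so that `‖E‖² = ‖ιE‖² + ‖curl E‖²` is the `H(curl)` norm),
and `M` multiplication by the density `n^m ≥ c > 0`. For every `λ ∈ [0, lam0]` and every
right-hand side `f`, the weak form of the predictor system
`(λ²/Δt + Δt n^m)E − ∇×B = f₁`, `∇×E + B/Δt = B^m/Δt` (after eliminating
`B = B^m − Δt ∇×E`), i.e.
`(λ²/Δt)⟨ιE, ιE'⟩ + Δt⟨M ιE, ιE'⟩ + Δt⟨curl E, curl E'⟩ = f(E')` for all `E'`,
has a unique solution `E`, with inverse bound `‖E‖ ≤ K‖f‖` uniform in `λ ∈ [0, lam0]`;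
in particular this holds at the quasi-neutral limit `λ = 0`. -/
theorem ap_field_solver_uniformly_invertible
    {V H : Type*} [NormedAddCommGroup V] [InnerProductSpace ℝ V] [CompleteSpace V]
    [NormedAddCommGroup H] [InnerProductSpace ℝ H] [CompleteSpace H]
    (ι : V →L[ℝ] H) (curl : V →L[ℝ] H)
    (hnorm : ∀ E : V, ‖E‖ ^ 2 = ‖ι E‖ ^ 2 + ‖curl E‖ ^ 2)
    (M : H →L[ℝ] H) (c : ℝ) (hc : 0 < c)
    (hM : ∀ u : H, c * ‖u‖ ^ 2 ≤ ⟪M u, u⟫)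
    (Δt lam0 : ℝ) (hΔt : 0 < Δt) (hlam0 : 0 ≤ lam0) :
    ∃ K > 0, ∀ lam ∈ Set.Icc (0 : ℝ) lam0, ∀ f : V →L[ℝ] ℝ,
      (∃! E : V, ∀ E' : V,
          (lam ^ 2 / Δt) * ⟪ι E, ι E'⟫ + Δt * ⟪M (ι E), ι E'⟫
            + Δt * ⟪curl E, curl E'⟫ = f E')
      ∧ ∀ E : V, (∀ E' : V,
          (lam ^ 2 / Δt) * ⟪ι E, ι E'⟫ + Δt * ⟪M (ι E), ι E'⟫
            + Δt * ⟪curl E, curl E'⟫ = f E') → ‖E‖ ≤ K * ‖f‖ := by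
  set μ : ℝ := Δt * min c 1 with hμdef
  have hμ : 0 < μ := mul_pos hΔt (lt_min hc one_pos)
  refine ⟨μ⁻¹, inv_pos.mpr hμ, ?_⟩
  rintro lam ⟨hlam, -⟩ f
  -- the operator T realizing the bilinear form
  set T : V →L[ℝ] V :=
    (lam ^ 2 / Δt) • ((ContinuousLinearMap.adjoint ι).comp ι)
      + Δt • ((ContinuousLinearMap.adjoint ι).comp (M.comp ι))
      + Δt • ((ContinuousLinearMap.adjoint curl).comp curl) with hTdef
  have hT : ∀ E E' : V, ⟪T E, E'⟫ =
      (lam ^ 2 / Δt) * ⟪ι E, ι E'⟫ + Δt * ⟪M (ι E), ι E'⟫ + Δt * ⟪curl E, curl E'⟫ := by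
    intro E E'
    simp [hTdef, inner_add_left, inner_smul_left, ContinuousLinearMap.adjoint_inner_left]
  set B : V →L[ℝ] V →L[ℝ] ℝ := (innerSL ℝ).comp T with hBdef
  have hB : ∀ E E' : V, B E E' = ⟪T E, E'⟫ := fun E E' => rfl
  have hco : ∀ E : V, μ * ‖E‖ ^ 2 ≤ B E E := by
    intro E
    rw [hB, hT]
    have h1 : 0 ≤ (lam ^ 2 / Δt) * ⟪ι E, ι E⟫ := by
      apply mul_nonneg (div_nonneg (sq_nonneg _) hΔt.le) real_inner_self_nonneg
    have h2 : Δt * (c * ‖ι E‖ ^ 2) ≤ Δt * ⟪M (ι E), ι E⟫ :=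
      mul_le_mul_of_nonneg_left (hM (ι E)) hΔt.le
    have h3 : ⟪curl E, curl E⟫ = ‖curl E‖ ^ 2 := real_inner_self_eq_norm_sq _
    have hmin : μ * ‖E‖ ^ 2 ≤ Δt * (c * ‖ι E‖ ^ 2) + Δt * ‖curl E‖ ^ 2 := by
      rw [hnorm E, hμdef]
      have h4 : min c 1 * ‖ι E‖ ^ 2 ≤ c * ‖ι E‖ ^ 2 :=
        mul_le_mul_of_nonneg_right (min_le_left _ _) (sq_nonneg _)
      have h5 : min c 1 * ‖curl E‖ ^ 2 ≤ 1 * ‖curl E‖ ^ 2 :=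
        mul_le_mul_of_nonneg_right (min_le_right _ _) (sq_nonneg _)
      nlinarith [hΔt.le]
    rw [h3]
    linarith
  have hcoercive : IsCoercive B := by
    refine ⟨μ, hμ, fun u => ?_⟩
    calc μ * ‖u‖ * ‖u‖ = μ * ‖u‖ ^ 2 := by ring
      _ ≤ B u u := hco u
  -- the solution
  set g : V := (InnerProductSpace.toDual ℝ V).symm f with hgdef
  have hg : ∀ w : V, ⟪g, w⟫ = f w := by
    intro w
    simp [hgdef, InnerProductSpace.toDual_symm_apply]
  set E₀ : V := hcoercive.continuousLinearEquivOfBilin.symm g with hE₀def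
  have hE₀ : ∀ w : V, B E₀ w = f w := by
    intro w
    rw [← hg w, ← hcoercive.continuousLinearEquivOfBilin_apply E₀ w]
    simp [hE₀def]
  have key : ∀ E : V, (∀ E' : V,
      (lam ^ 2 / Δt) * ⟪ι E, ι E'⟫ + Δt * ⟪M (ι E), ι E'⟫
        + Δt * ⟪curl E, curl E'⟫ = f E') ↔ ∀ E' : V, B E E' = f E' := by
    intro E
    constructor
    · intro h E'; rw [hB, hT]; exact h E'
    · intro h E'; rw [← hT E E', ← hB E E']; exact h E'
  constructor
  · refine ⟨E₀, ?_, ?_⟩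
    · exact (key E₀).mpr hE₀
    · intro E hE
      have hE' : ∀ w, B E w = f w := (key E).mp hE
      have : hcoercive.continuousLinearEquivOfBilin E = g := by
        apply ext_inner_right ℝ
        intro w
        rw [hcoercive.continuousLinearEquivOfBilin_apply, hE' w, hg w]
      have := congrArg hcoercive.continuousLinearEquivOfBilin.symm this
      simpa [hE₀def] using this
  · intro E hE
    have hE' : ∀ w, B E w = f w := (key E).mp hE
    have h1 : μ * ‖E‖ ^ 2 ≤ f E := (hE' E) ▸ hco E
    have h2 : f E ≤ ‖f‖ * ‖E‖ := le_trans (le_abs_self _) (f.le_opNorm E)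
    rcases eq_or_lt_of_le (norm_nonneg E) with h0 | h0
    · rw [← h0]; positivity
    · have hmm : μ * ‖E‖ * ‖E‖ ≤ ‖f‖ * ‖E‖ := by nlinarith
      have h3 : μ * ‖E‖ ≤ ‖f‖ := le_of_mul_le_mul_right hmm h0
      calc ‖E‖ = μ⁻¹ * (μ * ‖E‖) := by field_simp
        _ ≤ μ⁻¹ * ‖f‖ := mul_le_mul_of_nonneg_left h3 (inv_pos.mpr hμ).le
end
end

section
/- In the electrostatic 1D setting with E = −∂_x φ, the particle–Poisson system dx_p/dt = v_p, dv_p/dt = −E(x_p), −λ²∂_x²φ = 1 − n, with periodic boundary conditions and E(x_p) = ∫E(x)S(x − x_p)dx, n(x) = Σ_p w_p S(x − x_p), conserves the total energy d/dt[Σ_p (1/2)w_p v_p² + (λ²/2)∫E(x)² dx] = 0. -/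
open MeasureTheory

noncomputable section

/-- partial derivative in the first variable, as a `HasDerivAt` statement. -/
private lemma hasDerivAt_fst' {g : ℝ × ℝ → ℝ} (hg : Differentiable ℝ g) (x t : ℝ) :
    HasDerivAt (fun x' => g (x', t)) (fderiv ℝ g (x, t) (1, 0)) x :=
  (hg (x, t)).hasFDerivAt.comp_hasDerivAt x ((hasDerivAt_id x).prodMk (hasDerivAt_const x t))

/-- partial derivative in the second variable, as a `HasDerivAt` statement. -/
private lemma hasDerivAt_snd' {g : ℝ × ℝ → ℝ} (hg : Differentiable ℝ g) (x t : ℝ) :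
    HasDerivAt (fun s' => g (x, s')) (fderiv ℝ g (x, t) (0, 1)) t :=
  (hg (x, t)).hasFDerivAt.comp_hasDerivAt t ((hasDerivAt_const t x).prodMk (hasDerivAt_id t))

/-- Clairaut's theorem for a smooth function on `ℝ × ℝ`, in terms of
the applied partial derivatives. -/
private lemma clairaut' {g : ℝ × ℝ → ℝ} (hg : ContDiff ℝ (⊤ : ℕ∞) g) (x s : ℝ) :
    deriv (fun x' => fderiv ℝ g (x', s) (0, 1)) x
      = deriv (fun s' => fderiv ℝ g (x, s') (1, 0)) s := by
  have hgd : Differentiable ℝ g := hg.differentiable (by simp)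
  have hf'd : Differentiable ℝ (fderiv ℝ g) := (hg.fderiv_right (m := (⊤ : ℕ∞)) (by simp)).differentiable (by simp)
  have hf'' := (hf'd (x, s)).hasFDerivAt
  have hA : HasDerivAt (fun x' => fderiv ℝ g (x', s) (0, 1))
      (fderiv ℝ (fderiv ℝ g) (x, s) (1, 0) (0, 1)) x := by
    have h1 : HasFDerivAt (fun q : ℝ × ℝ => fderiv ℝ g q (0, 1))
        ((ContinuousLinearMap.apply ℝ ℝ ((0 : ℝ), (1 : ℝ))).comp
          (fderiv ℝ (fderiv ℝ g) (x, s))) (x, s) :=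
      (ContinuousLinearMap.apply ℝ ℝ ((0 : ℝ), (1 : ℝ))).hasFDerivAt.comp (x, s) hf''
    simpa [Function.comp_def] using h1.comp_hasDerivAt x ((hasDerivAt_id x).prodMk (hasDerivAt_const x s))
  have hB : HasDerivAt (fun s' => fderiv ℝ g (x, s') (1, 0))
      (fderiv ℝ (fderiv ℝ g) (x, s) (0, 1) (1, 0)) s := by
    have h1 : HasFDerivAt (fun q : ℝ × ℝ => fderiv ℝ g q (1, 0))
        ((ContinuousLinearMap.apply ℝ ℝ ((1 : ℝ), (0 : ℝ))).comp
          (fderiv ℝ (fderiv ℝ g) (x, s))) (x, s) :=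
      (ContinuousLinearMap.apply ℝ ℝ ((1 : ℝ), (0 : ℝ))).hasFDerivAt.comp (x, s) hf''
    simpa [Function.comp_def] using h1.comp_hasDerivAt s ((hasDerivAt_const s x).prodMk (hasDerivAt_id s))
  rw [hA.deriv, hB.deriv]
  exact second_derivative_symmetric (fun y => (hgd y).hasFDerivAt) hf'' (1, 0) (0, 1)

/-- energy conservation for the 1D electrostatic particle–Poisson system
with shape-function deposition and interpolation on a periodic interval `[a,b]`. -/
theorem particle_poisson_energy_conservation_1d
    (N : ℕ) (a b : ℝ) (hab : a < b)
    (lam : ℝ) (hlam : 0 < lam)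
    (w : Fin N → ℝ) (hw : ∀ p, 0 < w p)
    (S : ℝ → ℝ) (hS_smooth : ContDiff ℝ (⊤ : ℕ∞) S) (hS_nonneg : ∀ y, 0 ≤ S y)
    (hS_sym : ∀ y, S (-y) = S y)
    (hS_per : Function.Periodic S (b - a))
    (hS_int : (∫ y in Set.Icc a b, S y) = 1)
    (X V : Fin N → ℝ → ℝ) (φ E : ℝ → ℝ → ℝ)
    (hφ_smooth : ContDiff ℝ (⊤ : ℕ∞) (fun p : ℝ × ℝ => φ p.1 p.2))
    (hX_smooth : ∀ p, ContDiff ℝ (⊤ : ℕ∞) (X p)) (hV_smooth : ∀ p, ContDiff ℝ (⊤ : ℕ∞) (V p))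
    -- periodic boundary conditions for the potential
    (hφ_per : ∀ x t, φ (x + (b - a)) t = φ x t)
    -- electrostatic field `E = −∂ₓφ`
    (hE : ∀ x t, E x t = -deriv (fun z => φ z t) x)
    -- the Poisson equation `−λ² ∂ₓ²φ = 1 − n`, `n(x) = Σ_p w_p S(x − x_p)`
    (hPoisson : ∀ x t,
      -(lam ^ 2) * deriv (fun z => deriv (fun r => φ r t) z) x
        = 1 - ∑ p, w p * S (x - X p t))
    -- Newton's equations with interpolated field `E(x_p) = ∫ E(x)S(x − x_p)dx`
    (hNewtonX : ∀ p t, deriv (X p) t = V p t)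
    (hNewtonV : ∀ p t, deriv (V p) t = -∫ y in Set.Icc a b, E y t * S (y - X p t)) :
    ∀ t, deriv (fun s =>
        (∑ p, (1/2) * w p * (V p s) ^ 2)
          + (lam ^ 2 / 2) * ∫ y in Set.Icc a b, (E y s) ^ 2) t = 0 := by
  intro t
  have hφd : Differentiable ℝ (fun p : ℝ × ℝ => φ p.1 p.2) := hφ_smooth.differentiable (by simp)
  -- joint smoothness of the field
  have hEfd : (fun p : ℝ × ℝ => E p.1 p.2)
      = fun p => -(fderiv ℝ (fun q : ℝ × ℝ => φ q.1 q.2) p (1, 0)) := by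
    funext p
    rw [hE p.1 p.2, (hasDerivAt_fst' hφd p.1 p.2).deriv]
  have hfC : ContDiff ℝ (⊤ : ℕ∞) (fun p : ℝ × ℝ => E p.1 p.2) := by
    rw [hEfd]
    exact ((hφ_smooth.fderiv_right (by simp)).clm_apply contDiff_const).neg
  have hfd : Differentiable ℝ (fun p : ℝ × ℝ => E p.1 p.2) := hfC.differentiable (by simp)
  -- partial derivatives of the field
  set px : ℝ × ℝ → ℝ := fun p => fderiv ℝ (fun q : ℝ × ℝ => E q.1 q.2) p (1, 0) with hpxdef
  set pt : ℝ × ℝ → ℝ := fun p => fderiv ℝ (fun q : ℝ × ℝ => E q.1 q.2) p (0, 1) with hptdef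
  have hpxC : ContDiff ℝ (⊤ : ℕ∞) px := (hfC.fderiv_right (by simp)).clm_apply contDiff_const
  have hptC : ContDiff ℝ (⊤ : ℕ∞) pt := (hfC.fderiv_right (by simp)).clm_apply contDiff_const
  have hEx : ∀ x s, HasDerivAt (fun x' => E x' s) (px (x, s)) x := fun x s =>
    hasDerivAt_fst' hfd x s
  have hEt : ∀ x s, HasDerivAt (fun s' => E x s') (pt (x, s)) s := fun x s =>
    hasDerivAt_snd' hfd x s
  -- Poisson's equation in terms of `px`
  have hpxE : ∀ x s, lam ^ 2 * px (x, s) = 1 - ∑ p, w p * S (x - X p s) := by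
    intro x s
    have h1 : (fun x' => E x' s) = fun x' => -deriv (fun z => φ z s) x' := by
      funext x'; exact hE x' s
    have h2 : px (x, s) = -deriv (fun z => deriv (fun r => φ r s) z) x := by
      rw [← (hEx x s).deriv, h1, deriv.fun_neg]
    rw [h2, ← hPoisson x s]; ring
  -- Clairaut
  have hcomm : ∀ x s, deriv (fun x' => pt (x', s)) x = deriv (fun s' => px (x, s')) s :=
    fun x s => clairaut' hfC x s
  -- time derivative of Poisson's equation
  have hptx : ∀ x, lam ^ 2 * deriv (fun s' => px (x, s')) t
      = ∑ p, w p * V p t * deriv S (x - X p t) := by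
    intro x
    have hfun : (fun s' => lam ^ 2 * px (x, s'))
        = fun s' => 1 - ∑ p, w p * S (x - X p s') := by
      funext s'; exact hpxE x s'
    have hR : HasDerivAt (fun s' => 1 - ∑ p, w p * S (x - X p s'))
        (-(∑ p, w p * (deriv S (x - X p t) * (-(V p t))))) t := by
      have hsum : HasDerivAt (fun s' => ∑ p, w p * S (x - X p s'))
          (∑ p, w p * (deriv S (x - X p t) * (-(V p t)))) t := by
        refine HasDerivAt.fun_sum fun p _ => ?_
        have hX : HasDerivAt (fun s' => x - X p s') (-(V p t)) t := by
          have h := ((hX_smooth p).differentiable (by simp) t).hasDerivAt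
          rw [hNewtonX p t] at h
          simpa using (hasDerivAt_const t x).fun_sub h
        exact HasDerivAt.const_mul (w p)
          (((hS_smooth.differentiable (by simp) _).hasDerivAt.comp t hX))
      simpa using (hasDerivAt_const t (1 : ℝ)).fun_sub hsum
    have hL : deriv (fun s' => lam ^ 2 * px (x, s')) t
        = lam ^ 2 * deriv (fun s' => px (x, s')) t :=
      deriv_const_mul _ (hasDerivAt_snd' (hpxC.differentiable (by simp)) x t).differentiableAt
    rw [← hL, hfun, hR.deriv, ← Finset.sum_neg_distrib]
    exact Finset.sum_congr rfl fun p _ => by ring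
  -- particle current weights
  set c : Fin N → ℝ := fun p => w p * V p t with hc
  -- the key identity: `λ² ∂ₜ E (x,t) - Σ c_p S (x - X_p)` is constant in `x`
  have hSd : Differentiable ℝ S := hS_smooth.differentiable (by simp)
  have hkey : ∀ x, lam ^ 2 * pt (x, t)
      = (lam ^ 2 * pt (a, t) - ∑ p, c p * S (a - X p t)) + ∑ p, c p * S (x - X p t) := by
    have hgd : Differentiable ℝ
        (fun x => lam ^ 2 * pt (x, t) - ∑ p, c p * S (x - X p t)) := by
      refine Differentiable.sub ?_ ?_
      · exact fun x =>
          ((hasDerivAt_fst' (hptC.differentiable (by simp)) x t).differentiableAt.const_mul _)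
      · refine Differentiable.fun_sum fun p _ => ?_
        exact ((hSd.comp (differentiable_id.sub_const _)).const_mul _)
    have hgz : ∀ x, deriv (fun x => lam ^ 2 * pt (x, t) - ∑ p, c p * S (x - X p t)) x = 0 := by
      intro x
      have h1 : HasDerivAt (fun x' => ∑ p, c p * S (x' - X p t))
          (∑ p, c p * deriv S (x - X p t)) x := by
        refine HasDerivAt.fun_sum fun p _ => ?_
        have hx : HasDerivAt (fun x' => x' - X p t) 1 x := (hasDerivAt_id x).sub_const _
        have h := (hSd _).hasDerivAt.comp x hx
        simpa using HasDerivAt.const_mul (c p) h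
      have h2 := HasDerivAt.const_mul (lam ^ 2) (hasDerivAt_fst' (hptC.differentiable (by simp)) x t)
      rw [(h2.fun_sub h1).deriv, ← (hasDerivAt_fst' (hptC.differentiable (by simp)) x t).deriv,
        hcomm x t, hptx x]
      simp [hc]
    intro x
    have h := is_const_of_deriv_eq_zero hgd hgz x a
    linarith [h]
  -- the total field has zero average over a period
  have hψC : ContDiff ℝ (⊤ : ℕ∞) (fun z => φ z t) := hφ_smooth.comp (contDiff_id.prodMk contDiff_const)
  have hE0 : (∫ y in Set.Icc a b, E y t) = 0 := by
    have h2 : ∀ y : ℝ, E y t = -deriv (fun z => φ z t) y := fun y => hE y t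
    have hba : φ b t = φ a t := by
      have h := hφ_per a t
      rwa [show a + (b - a) = b by ring] at h
    calc (∫ y in Set.Icc a b, E y t)
        = ∫ y in Set.Icc a b, -deriv (fun z => φ z t) y := by simp only [h2]
      _ = ∫ y in Set.Ioc a b, -deriv (fun z => φ z t) y := integral_Icc_eq_integral_Ioc
      _ = ∫ y in a..b, -deriv (fun z => φ z t) y :=
          (intervalIntegral.integral_of_le hab.le).symm
      _ = -(φ b t - φ a t) := by
          rw [intervalIntegral.integral_neg,
            intervalIntegral.integral_deriv_eq_sub
              (fun y _ => (hψC.differentiable (by simp) y))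
              ((hψC.continuous_deriv (by simp)).intervalIntegrable a b)]
      _ = 0 := by rw [hba]; ring
  -- continuity facts
  have hEcont : Continuous (fun p : ℝ × ℝ => E p.1 p.2) := hfC.continuous
  have hptcont : Continuous pt := hptC.continuous
  have hcontE : Continuous (fun y => E y t) :=
    hEcont.comp (continuous_id.prodMk continuous_const)
  have hintE : IntegrableOn (fun y => E y t) (Set.Icc a b) := hcontE.integrableOn_Icc
  have hintES : ∀ p, IntegrableOn (fun y => E y t * S (y - X p t)) (Set.Icc a b) := fun p =>
    (hcontE.mul (hS_smooth.continuous.comp (continuous_id.sub continuous_const))).integrableOn_Icc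
  -- differentiation under the integral sign for the field energy
  have hqcont : Continuous (fun p : ℝ × ℝ => 2 * E p.1 p.2 * pt p) :=
    (continuous_const.mul hEcont).mul hptcont
  obtain ⟨M, hM⟩ :=
    ((isCompact_Icc : IsCompact (Set.Icc a b)).prod
      (isCompact_Icc : IsCompact (Set.Icc (t - 1) (t + 1)))).exists_bound_of_continuousOn
      hqcont.continuousOn
  have hfield : HasDerivAt (fun s => ∫ y in Set.Icc a b, (E y s) ^ 2)
      (∫ y in Set.Icc a b, 2 * E y t * pt (y, t)) t := by
    have key := hasDerivAt_integral_of_dominated_loc_of_deriv_le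
      (μ := volume.restrict (Set.Icc a b)) (F := fun s y => (E y s) ^ 2)
      (F' := fun s y => 2 * E y s * pt (y, s)) (x₀ := t)
      (bound := fun _ => M) (Metric.ball_mem_nhds t one_pos)
      (Filter.Eventually.of_forall fun s =>
        (((hEcont.comp (continuous_id.prodMk continuous_const)).pow 2).aestronglyMeasurable))
      (((hcontE.fun_pow 2).integrableOn_Icc))
      (((continuous_const.mul hcontE).mul
        (hptcont.comp (continuous_id.prodMk continuous_const))).aestronglyMeasurable)
      ?_ ?_ ?_
    · exact key.2
    · refine (ae_restrict_iff' measurableSet_Icc).2 (Filter.Eventually.of_forall fun y hy => ?_)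
      intro s hs
      have hmem : s ∈ Set.Icc (t - 1) (t + 1) := by
        rw [Metric.mem_ball, Real.dist_eq] at hs
        have := abs_lt.mp hs
        constructor <;> linarith [this.1, this.2]
      exact hM (y, s) ⟨hy, hmem⟩
    · exact integrableOn_const measure_Icc_lt_top.ne
    · refine Filter.Eventually.of_forall fun y s _ => ?_
      simpa using (hEt y s).fun_pow 2
  -- kinetic energy derivative
  have hkin : HasDerivAt (fun s => ∑ p, (1/2) * w p * V p s ^ 2)
      (∑ p, c p * deriv (V p) t) t := by
    refine HasDerivAt.fun_sum fun p _ => ?_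
    have hv : HasDerivAt (V p) (deriv (V p) t) t :=
      ((hV_smooth p).differentiable (by simp) t).hasDerivAt
    have h := HasDerivAt.const_mul ((1 : ℝ)/2 * w p) (hv.fun_pow 2)
    convert h using 1
    · rfl
    simp only [hc, pow_one, Nat.cast_ofNat]
    ring
  -- the field-energy derivative equals the work done on the particles
  have hI : (lam ^ 2 / 2) * (∫ y in Set.Icc a b, 2 * E y t * pt (y, t))
      = ∑ p, c p * ∫ y in Set.Icc a b, E y t * S (y - X p t) := by
    set C : ℝ := lam ^ 2 * pt (a, t) - ∑ p, c p * S (a - X p t) with hC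
    have h1 : ∀ y : ℝ, (lam ^ 2 / 2) * (2 * E y t * pt (y, t))
        = C * E y t + ∑ p, c p * (E y t * S (y - X p t)) := by
      intro y
      have hk : lam ^ 2 * pt (y, t) = C + ∑ p, c p * S (y - X p t) := hkey y
      calc (lam ^ 2 / 2) * (2 * E y t * pt (y, t))
          = E y t * (lam ^ 2 * pt (y, t)) := by ring
        _ = E y t * (C + ∑ p, c p * S (y - X p t)) := by rw [hk]
        _ = C * E y t + ∑ p, c p * (E y t * S (y - X p t)) := by
            rw [mul_add, Finset.mul_sum, mul_comm (E y t) C]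
            exact congrArg _ (Finset.sum_congr rfl fun p _ => by ring)
    rw [← integral_const_mul]
    simp only [h1]
    rw [integral_add (hintE.const_mul C)
        (integrable_finset_sum _ fun p _ => (hintES p).const_mul (c p)),
      integral_finset_sum _ fun p _ => (hintES p).const_mul (c p),
      integral_const_mul, hE0, mul_zero, zero_add]
    exact Finset.sum_congr rfl fun p _ => integral_const_mul _ _
  -- putting everything together
  have htot := (hkin.fun_add (hfield.const_mul (lam ^ 2 / 2))).deriv
  rw [htot, hI, ← Finset.sum_add_distrib]
  refine Finset.sum_eq_zero fun p _ => ?_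
  rw [hNewtonV]
  ring
end
end

section
/- Second-difference form of the reformulated Ampère law: assume λ²(E^m − E^{m−1})/Δt = ∇×B^m − J^m, B^{m+1} = B^m − Δt∇×Ẽ^{m+1}, λ²(Ẽ^{m+1} − E^m)/Δt = ∇×B^{m+1} − J̃^{m+1}, J̃^{m+1} = J^{m+1,*} + Δt n^m Ẽ^{m+1}, and J^{m+1,*} = J^m + Δt∇·S^m − ΔtJ^m×B^m. Then λ²(Ẽ^{m+1} − 2E^m + E^{m−1})/Δt² + ∇×∇×Ẽ^{m+1} + n^mẼ^{m+1} + ∇·S^m − J^m×B^m = 0, a first-order consistent discretization of λ²∂_t²E + ∇×(∇×E) + nE = J×B − ∇·S. -/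
open MeasureTheory Matrix

noncomputable section

lemma contDiff_pd (g : V3 → ℝ) (hg : ContDiff ℝ (⊤ : ℕ∞) g) (j : Fin 3) :
    ContDiff ℝ (⊤ : ℕ∞) (fun x => pd j g x) :=
  (hg.fderiv_right (by simp)).clm_apply contDiff_const

lemma pd_sub_mul (f g : V3 → ℝ) (c : ℝ) (x : V3) (j : Fin 3)
    (hf : DifferentiableAt ℝ f x) (hg : DifferentiableAt ℝ g x) :
    pd j (fun y => f y - c * g y) x = pd j f x - c * pd j g x := by
  unfold pd
  rw [fderiv_fun_sub hf (hg.const_mul c), fderiv_const_mul hg]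
  simp

lemma vcurl_comp_contDiff (F : V3 → V3) (hF : ContDiff ℝ (⊤ : ℕ∞) F) (i : Fin 3) :
    ContDiff ℝ (⊤ : ℕ∞) (fun y => vcurl F y i) := by
  have h := fun k => contDiff_pi.1 hF k
  fin_cases i <;> simp only [vcurl, Matrix.cons_val_zero, Matrix.cons_val_one,
    Matrix.head_cons, Matrix.cons_val_two, Matrix.tail_cons, Fin.isValue] <;>
    exact (contDiff_pd _ (h _) _).sub (contDiff_pd _ (h _) _)

lemma vcurl_sub_smul (F G : V3 → V3) (c : ℝ) (x : V3)
    (hF : ∀ k (y : V3), DifferentiableAt ℝ (fun z => F z k) y)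
    (hG : ∀ k (y : V3), DifferentiableAt ℝ (fun z => G z k) y) :
    vcurl (fun y => F y - c • G y) x = vcurl F x - c • vcurl G x := by
  have key : ∀ (j k : Fin 3),
      pd j (fun y => F y k - c * G y k) x
        = pd j (fun y => F y k) x - c * pd j (fun y => G y k) x := fun j k =>
    pd_sub_mul _ _ _ _ _ (hF k x) (hG k x)
  funext i
  fin_cases i <;>
    simp [vcurl, key, smul_eq_mul] <;> ring

/-- algebraic elimination of `B^{m+1}`, `J̃^{m+1}`, `J^{m+1,*}` from the AP
updates yields the second-difference form of the reformulated Ampère law: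
`λ²(Ẽ^{m+1} − 2E^m + E^{m−1})/Δt² + ∇×∇×Ẽ^{m+1} + n^mẼ^{m+1} + ∇·S^m − J^m×B^m = 0`. -/
theorem reformulated_ampere_second_difference
    (Δt lam : ℝ) (hΔt : 0 < Δt) (hlam : 0 ≤ lam)
    (nm : V3 → ℝ) (hnm : ∀ x, 0 ≤ nm x)
    (Em1 Em Etil Bm Bm1 Jm Jstar Jtil : V3 → V3)
    (Sm : V3 → Fin 3 → Fin 3 → ℝ)
    (hEtil_smooth : ContDiff ℝ (⊤ : ℕ∞) Etil) (hBm_smooth : ContDiff ℝ (⊤ : ℕ∞) Bm)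
    -- `λ²(E^m − E^{m−1})/Δt = ∇×B^m − J^m`
    (hAmpOld : ∀ x, (lam ^ 2 / Δt) • (Em x - Em1 x) = vcurl Bm x - Jm x)
    -- `B^{m+1} = B^m − Δt∇×Ẽ^{m+1}`
    (hFar : ∀ x, Bm1 x = Bm x - Δt • vcurl Etil x)
    -- `λ²(Ẽ^{m+1} − E^m)/Δt = ∇×B^{m+1} − J̃^{m+1}`
    (hAmpNew : ∀ x, (lam ^ 2 / Δt) • (Etil x - Em x) = vcurl Bm1 x - Jtil x)
    -- `J̃^{m+1} = J^{m+1,*} + Δt n^m Ẽ^{m+1}`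
    (hJtil : ∀ x, Jtil x = Jstar x + (Δt * nm x) • Etil x)
    -- `J^{m+1,*} = J^m + Δt∇·S^m − ΔtJ^m×B^m`
    (hJstar : ∀ x, Jstar x
        = Jm x + Δt • (fun i => ∑ j, pd j (fun y => Sm y j i) x)
          - Δt • crossProduct (Jm x) (Bm x)) :
    ∀ x, (lam ^ 2 / Δt ^ 2) • (Etil x - (2 : ℝ) • Em x + Em1 x)
        + vcurl (fun y => vcurl Etil y) x
        + nm x • Etil x
        + (fun i => ∑ j, pd j (fun y => Sm y j i) x)
        - crossProduct (Jm x) (Bm x) = 0 := by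
  intro x
  have hBm1fun : Bm1 = fun y => Bm y - Δt • vcurl Etil y := funext hFar
  have hdB : ∀ k (y : V3), DifferentiableAt ℝ (fun z => Bm z k) y := fun k y =>
    ((contDiff_pi.1 hBm_smooth k).differentiable (by simp)).differentiableAt
  have hdC : ∀ k (y : V3), DifferentiableAt ℝ (fun z => vcurl Etil z k) y := fun k y =>
    ((vcurl_comp_contDiff Etil hEtil_smooth k).differentiable (by simp)).differentiableAt
  have hcurl : vcurl Bm1 x = vcurl Bm x - Δt • vcurl (fun y => vcurl Etil y) x := by
    rw [hBm1fun]
    exact vcurl_sub_smul Bm (fun y => vcurl Etil y) Δt x hdB hdC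
  have h0 := hAmpOld x
  have h1 := hAmpNew x
  rw [hcurl, hJtil x, hJstar x] at h1
  funext i
  have h0i := congrFun h0 i
  have h1i := congrFun h1 i
  have hne : Δt ≠ 0 := hΔt.ne'
  simp only [Pi.add_apply, Pi.sub_apply, Pi.smul_apply, smul_eq_mul, Pi.zero_apply] at h0i h1i ⊢
  field_simp at h0i h1i ⊢
  linear_combination h1i - h0i
end
end
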